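/- Let d ≥ 1, let Θ ∈ M_d(ℝ) be a skew-symmetric nondegenerate matrix, and let m ≥ 1 be an integer. Then the set h_Θ(mℤ^d + (1,1,…,1)) = { h_Θ(m·r + (1,…,1)) : r ∈ ℤ^d } is dense in the torus 𝕋^d = (ℝ/ℤ)^d. -/

import Mathlib

/-!
Let `K` be the closure of the subgroup `H = h_Θ(mℤ^d)` of the torus. Haar measure of the compact
group `K`, pushed into the torus, is a probability measure invariant under translation by `K`, so
it annihilates every character that is nontrivial somewhere on `H`. Nondegeneracy of `Θ` (tested on
the generators `m eⱼ` of `mℤ^d`) says that every nontrivial character is nontrivial on `H`. Hence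
this measure has the Fourier coefficients of Haar measure on the torus, so the two coincide; being
supported on `K`, it forces `K` to be the whole torus. Finally, `h_Θ(mℤ^d + 1)` is a translate
of `H`.
-/

open MeasureTheory Set TopologicalSpace
open scoped Matrix

theorem MeasureTheory.ext_of_forall_mem_starSubalgebra_integral_eq_of_compact {E 𝕜 : Type*}
    [RCLike 𝕜] [MeasurableSpace E] [TopologicalSpace E] [CompactSpace E] [PolishSpace E]
    [BorelSpace E] {P P' : Measure E} [IsFiniteMeasure P] [IsFiniteMeasure P']
    {A : StarSubalgebra 𝕜 C(E, 𝕜)} (hA : A.SeparatesPoints)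
    (heq : ∀ g ∈ A, ∫ x, g x ∂P = ∫ x, g x ∂P') : P = P' := by
  let B := A.comap (BoundedContinuousFunction.toContinuousMapStarₐ 𝕜)
  refine ext_of_forall_mem_subalgebra_integral_eq_of_polish (A := B) ?_ fun g hg ↦ heq _ hg
  intro x y hxy
  obtain ⟨_, ⟨g, hg, rfl⟩, hgxy⟩ := hA hxy
  exact ⟨_, ⟨BoundedContinuousFunction.mkOfCompact g, ⟨_, hg, rfl⟩, rfl⟩, hgxy⟩

theorem AddSubgroup.exists_isProbabilityMeasure_measurePreserving_add {G : Type*} [AddGroup G]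
    [TopologicalSpace G] [IsTopologicalAddGroup G] [T2Space G] [MeasurableSpace G] [BorelSpace G]
    (K : AddSubgroup G) (hK : IsCompact (K : Set G)) :
    ∃ μ : Measure G, IsProbabilityMeasure μ ∧ μ (K : Set G)ᶜ = 0 ∧
      ∀ k ∈ K, MeasurePreserving (k + ·) μ μ := by
  have : CompactSpace K := isCompact_iff_compactSpace.mp hK
  let μK : Measure K := Measure.addHaarMeasure ⊤
  have : IsProbabilityMeasure μK :=
    ⟨by simpa using Measure.addHaarMeasure_self (K₀ := (⊤ : PositiveCompacts K))⟩
  refine ⟨μK.map (↑), Measure.isProbabilityMeasure_map measurable_subtype_coe.aemeasurable, ?_, ?_⟩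
  · rw [Measure.map_apply measurable_subtype_coe hK.isClosed.measurableSet.compl,
      preimage_compl, Subtype.coe_preimage_self, compl_univ, measure_empty]
  · intro k hk
    refine ⟨measurable_const_add k, ?_⟩
    rw [Measure.map_map (measurable_const_add k) measurable_subtype_coe]
    have : (k + ·) ∘ ((↑) : K → G) = (↑) ∘ (⟨k, hk⟩ + ·) := rfl
    rw [this, ← Measure.map_map measurable_subtype_coe (measurable_const_add _),
      map_add_left_eq_self]

namespace UnitAddTorus

variable {d : Type*} [Fintype d]

theorem mFourier_add_apply (n : d → ℤ) (x y : UnitAddTorus d) :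
    mFourier n (x + y) = mFourier n x * mFourier n y := by
  simp only [mFourier, ContinuousMap.coe_mk, Pi.add_apply, fourier_apply, smul_add,
    AddCircle.toCircle_add, Circle.coe_mul, Finset.prod_mul_distrib]

theorem mFourier_coe_apply (n : d → ℤ) (x : d → ℝ) :
    mFourier n (fun i ↦ (x i : AddCircle (1 : ℝ))) =
      Complex.exp (2 * Real.pi * Complex.I * ∑ i, n i * x i) := by
  simp only [mFourier, ContinuousMap.coe_mk, fourier_coe_apply, ← Complex.exp_sum]
  push_cast
  rw [Finset.mul_sum]
  exact congrArg _ (Finset.sum_congr rfl fun i _ ↦ by ring)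

theorem mFourier_coe_eq_one_iff (n : d → ℤ) (x : d → ℝ) :
    mFourier n (fun i ↦ (x i : AddCircle (1 : ℝ))) = 1 ↔ ∃ z : ℤ, ∑ i, n i * x i = z := by
  rw [mFourier_coe_apply, Complex.exp_eq_one_iff]
  refine exists_congr fun z ↦ ?_
  rw [mul_comm (z : ℂ), mul_right_inj' Complex.two_pi_I_ne_zero]
  exact_mod_cast Iff.rfl

theorem integral_mFourier_eq_zero_of_measurePreserving {μ : Measure (UnitAddTorus d)}
    {n : d → ℤ} {h : UnitAddTorus d} (hμ : MeasurePreserving (h + ·) μ μ)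
    (hn : mFourier n h ≠ 1) : ∫ x, mFourier n x ∂μ = 0 := by
  have hshift : ∫ x, mFourier n (h + x) ∂μ = ∫ x, mFourier n x ∂μ :=
    MeasurePreserving.integral_comp' (f := MeasurableEquiv.addLeft h) hμ (mFourier n)
  simp only [mFourier_add_apply, integral_const_mul] at hshift
  have : (mFourier n h - 1) * ∫ x, mFourier n x ∂μ = 0 := by
    rw [sub_mul, hshift, one_mul, sub_self]
  exact (mul_eq_zero.mp this).resolve_left (sub_ne_zero.mpr hn)

theorem measure_ext_of_integral_mFourier_eq {μ ν : Measure (UnitAddTorus d)}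
    [IsFiniteMeasure μ] [IsFiniteMeasure ν]
    (h : ∀ n, ∫ x, mFourier n x ∂μ = ∫ x, mFourier n x ∂ν) : μ = ν := by
  refine ext_of_forall_mem_starSubalgebra_integral_eq_of_compact
    mFourierSubalgebra_separatesPoints fun g hg ↦ ?_
  replace hg : g ∈ Submodule.span ℂ (range mFourier) := mFourierSubalgebra_coe (d := d) ▸ hg
  induction hg using Submodule.span_induction with
  | mem _ hg => obtain ⟨n, rfl⟩ := hg; exact h n
  | zero => simp
  | add f g _ _ hf hg =>
    have hint (f : C(UnitAddTorus d, ℂ)) (μ : Measure (UnitAddTorus d)) [IsFiniteMeasure μ] :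
        Integrable f μ :=
      f.continuous.integrable_of_hasCompactSupport (.of_compactSpace _)
    simp only [ContinuousMap.add_apply]
    rw [integral_add (hint f μ) (hint g μ), integral_add (hint f ν) (hint g ν), hf, hg]
  | smul c f _ hf => simp only [ContinuousMap.smul_apply, integral_smul, hf]

theorem dense_of_forall_mFourier_ne_one (H : AddSubgroup (UnitAddTorus d))
    (hH : ∀ n ≠ 0, ∃ x ∈ H, mFourier n x ≠ 1) : Dense (H : Set (UnitAddTorus d)) := by
  obtain ⟨μ, _, hμK, hμinv⟩ :=
    H.topologicalClosure.exists_isProbabilityMeasure_measurePreserving_add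
      H.isClosed_topologicalClosure.isCompact
  let ν : Measure (UnitAddTorus d) := Measure.addHaarMeasure ⊤
  have : IsProbabilityMeasure ν :=
    ⟨by simpa using Measure.addHaarMeasure_self (K₀ := (⊤ : PositiveCompacts (UnitAddTorus d)))⟩
  have hμν : μ = ν := by
    refine measure_ext_of_integral_mFourier_eq fun n ↦ ?_
    rcases eq_or_ne n 0 with rfl | hn
    · simp [mFourier_zero]
    obtain ⟨x, hxH, hx⟩ := hH n hn
    rw [integral_mFourier_eq_zero_of_measurePreserving
        (hμinv x (H.le_topologicalClosure hxH)) hx,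
      integral_mFourier_eq_zero_of_measurePreserving (measurePreserving_add_left ν x) hx]
  rw [H.topologicalClosure_coe, hμν] at hμK
  refine dense_iff_closure_eq.mpr (compl_empty_iff.mp ?_)
  by_contra hne
  exact (isClosed_closure.isOpen_compl.measure_pos ν (nonempty_iff_ne_empty.mpr hne)).ne' hμK

end UnitAddTorus

namespace Matrix

variable {κ ι : Type*} [Fintype ι]

/-- The homomorphism `h_Θ : r ↦ Θ r mod ℤ^κ`. -/
def torusHom (Θ : Matrix κ ι ℝ) : (ι → ℤ) →+ UnitAddTorus κ :=
  (AddMonoidHom.compLeft (QuotientAddGroup.mk' _) κ).comp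
    (Θ.mulVecLin.toAddMonoidHom.comp (AddMonoidHom.compLeft (Int.castAddHom ℝ) ι))

theorem torusHom_apply (Θ : Matrix κ ι ℝ) (r : ι → ℤ) :
    Θ.torusHom r = fun i ↦ (((Θ *ᵥ fun j ↦ (r j : ℝ)) i : ℝ) : AddCircle (1 : ℝ)) := rfl

theorem torusHom_single [DecidableEq ι] (Θ : Matrix κ ι ℝ) (j : ι) (a : ℤ) :
    Θ.torusHom (Pi.single j a) = fun i ↦ ((Θ i j * a : ℝ) : AddCircle (1 : ℝ)) := by
  funext i
  simp [torusHom_apply, mulVec, dotProduct, Pi.single_apply]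

theorem denseRange_zsmul_torusHom [Fintype κ] (Θ : Matrix κ ι ℝ) {m : ℤ} (hm : m ≠ 0)
    (hΘ : ∀ n : κ → ℤ, (∀ j, ∃ z : ℤ, ∑ k, (n k : ℝ) * Θ k j = z) → n = 0) :
    DenseRange (m • Θ.torusHom) := by
  classical
  rw [DenseRange, ← AddMonoidHom.coe_range]
  refine UnitAddTorus.dense_of_forall_mFourier_ne_one _ fun n hn ↦ ?_
  by_contra! hall
  refine hn (smul_right_injective _ hm ((hΘ (m • n) fun j ↦ ?_).trans (smul_zero m).symm))
  have hval : (m • Θ.torusHom) (Pi.single j 1) =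
      fun i ↦ ((Θ i j * m : ℝ) : AddCircle (1 : ℝ)) := by
    rw [AddMonoidHom.smul_apply, ← map_zsmul, ← Pi.single_smul, smul_eq_mul, mul_one,
      torusHom_single]
  obtain ⟨z, hz⟩ :=
    (UnitAddTorus.mFourier_coe_eq_one_iff n _).mp (hval ▸ hall _ ⟨Pi.single j 1, rfl⟩)
  refine ⟨z, hz ▸ ?_⟩
  push_cast [Pi.smul_apply, smul_eq_mul]
  exact Finset.sum_congr rfl fun _ _ ↦ by ring

end Matrix

theorem stmt4_general (d : ℕ) (m : ℤ) (hm : 1 ≤ m)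
    (Θ : Matrix (Fin d) (Fin d) ℝ)
    (hnd : ∀ n : Fin d → ℤ, (∀ j : Fin d, ∃ z : ℤ, (∑ k, (n k : ℝ) * Θ k j) = (z : ℝ)) → n = 0) :
    Dense (Set.range (fun r : Fin d → ℤ => fun j : Fin d =>
      ((∑ k, Θ j k * ((m * r k + 1 : ℤ) : ℝ) : ℝ) : AddCircle (1 : ℝ)))) := by
  have hrange : (fun r : Fin d → ℤ => fun j : Fin d =>
      ((∑ k, Θ j k * ((m * r k + 1 : ℤ) : ℝ) : ℝ) : AddCircle (1 : ℝ))) =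
      (Θ.torusHom 1 + ·) ∘ (m • Θ.torusHom) := by
    funext r
    rw [Function.comp_apply, AddMonoidHom.smul_apply, ← map_zsmul, ← map_add, add_comm]
    rfl
  rw [hrange]
  exact (Homeomorph.addLeft (Θ.torusHom 1)).surjective.denseRange.comp
    (Θ.denseRange_zsmul_torusHom (by omega : m ≠ 0) hnd) (Homeomorph.addLeft _).continuous

/-- If `Θ ∈ M_d(ℝ)` is skew-symmetric and nondegenerate (`d ≥ 1`) and `m ≥ 1`
is an integer, then the image under `h_Θ` of the coset `mℤ^d + (1,…,1)` is dense in the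
torus `(ℝ/ℤ)^d`, where `h_Θ(r)_j = Σ_k Θ_{jk} r_k mod 1`. -/
theorem stmt4 (d : ℕ) (hd : 1 ≤ d) (m : ℤ) (hm : 1 ≤ m)
    (Θ : Matrix (Fin d) (Fin d) ℝ) (hskew : Θ.transpose = -Θ)
    (hnd : ∀ n : Fin d → ℤ, (∀ j : Fin d, ∃ z : ℤ, (∑ k, (n k : ℝ) * Θ k j) = (z : ℝ)) → n = 0) :
    Dense (Set.range (fun r : Fin d → ℤ => fun j : Fin d =>
      ((∑ k, Θ j k * ((m * r k + 1 : ℤ) : ℝ) : ℝ) : AddCircle (1 : ℝ)))) :=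
  stmt4_general d m hm Θ hnd
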